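/- arXiv:1707.02359 — 2 statements merged into one kernel-verified Lean document; each statement's English description precedes it below -/
import Mathlib

section
/- (Maehara's lemma) For any hemispherical finite subset X = {P₁, …, P_k} of S^{n+1}, the spherical polar set of the set of normalized nonnegative combinations { (Σ t_i P_i)/‖Σ t_i P_i‖ : t_i ≥ 0, Σ t_i = 1 } equals H(P₁) ∩ ⋯ ∩ H(P_k). -/
open scoped RealInnerProductSpace

def sphereSet (n : ℕ) : Set (EuclideanSpace ℝ (Fin (n+2))) := Metric.sphere 0 1

def hemi {n : ℕ} (P : EuclideanSpace ℝ (Fin (n+2))) :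
    Set (EuclideanSpace ℝ (Fin (n+2))) :=
  {Q | Q ∈ sphereSet n ∧ 0 ≤ ⟪P, Q⟫}

def sphPolar {n : ℕ} (X : Set (EuclideanSpace ℝ (Fin (n+2)))) :
    Set (EuclideanSpace ℝ (Fin (n+2))) :=
  ⋂ P ∈ X, hemi P

def Hemispherical {n : ℕ} (X : Set (EuclideanSpace ℝ (Fin (n+2)))) : Prop :=
  ∃ P ∈ sphereSet n, hemi P ∩ X = ∅

/-- Maehara's lemma: for a hemispherical finite subset `{P₁, …, P_k}` of `S^{n+1}`,
the spherical polar of the set of normalized nonnegative combinations equals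
`H(P₁) ∩ ⋯ ∩ H(P_k)`. -/
theorem stmt_5 {n : ℕ} (k : ℕ) (P : Fin k → EuclideanSpace ℝ (Fin (n+2)))
    (hP : ∀ i, P i ∈ sphereSet n) (hhem : Hemispherical (Set.range P)) :
    sphPolar {z | ∃ t : Fin k → ℝ, (∀ i, 0 ≤ t i) ∧ (∑ i, t i = 1) ∧
        z = ‖∑ i, t i • P i‖⁻¹ • ∑ i, t i • P i} =
      ⋂ i, hemi (P i) := by
  ext Q
  simp only [sphPolar, Set.mem_iInter, Set.mem_setOf_eq, hemi]
  constructor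
  · intro h i
    have hnorm : ‖P i‖ = 1 := by
      have := hP i
      simpa [sphereSet, mem_sphere_iff_norm] using this
    refine h (P i) ⟨fun j => if j = i then 1 else 0,
      fun j => by dsimp only; split <;> norm_num, by simp, ?_⟩
    have hs : ∑ j, (if j = i then (1:ℝ) else 0) • P j = P i := by
      simp [ite_smul]
    rw [hs, hnorm]
    simp
  · rintro h z ⟨t, ht0, ht1, rfl⟩
    have hk : Nonempty (Fin k) := by
      rcases Nat.eq_zero_or_pos k with h0 | h0
      · subst h0; simp at ht1
      · exact ⟨⟨0, h0⟩⟩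
    obtain ⟨i⟩ := hk
    refine ⟨(h i).1, ?_⟩
    rw [real_inner_smul_left, sum_inner]
    simp only [real_inner_smul_left]
    exact mul_nonneg (inv_nonneg.2 (norm_nonneg _))
      (Finset.sum_nonneg fun j _ => mul_nonneg (ht0 j) (h j).2)
end

section
/- For any closed hemispherical subset X ⊆ S^{n+1}, the equality s-conv(X) = (s-conv(X))°° holds, i.e. the spherical convex hull of X equals its double spherical polar set. -/
open scoped RealInnerProductSpace

def sconv {n : ℕ} (X : Set (EuclideanSpace ℝ (Fin (n+2)))) :
    Set (EuclideanSpace ℝ (Fin (n+2))) :=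
  {z | ∃ (k : ℕ) (P : Fin k → EuclideanSpace ℝ (Fin (n+2))) (t : Fin k → ℝ),
    (∀ i, P i ∈ X) ∧ (∀ i, 0 ≤ t i) ∧ (∑ i, t i = 1) ∧
    z = ‖∑ i, t i • P i‖⁻¹ • ∑ i, t i • P i}

/-!
Since `X` is compact and lies in the open hemisphere `{⟪P, ·⟫ < 0}`, its convex hull is compact
(Carathéodory) and misses `0`, so `s-conv(X)`, the radial projection of that hull, is closed. It is
therefore the trace on the sphere of the closed convex cone `K` generated by `X`. The polar of the
trace of a cone is the trace of its inner dual cone, as dual cones do not see rescaling; hence the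
double polar is the trace of `K** = K` (Farkas). The pole `P` also keeps the intermediate polar
nonempty, which matters because the polar of the empty set is the whole space, not the sphere.
-/

open Set Module NormedSpace
open scoped Pointwise

theorem Function.extend_mem {α β γ : Type*} {f : α → β} {g : α → γ} {e' : β → γ} {s : Set γ}
    (hg : ∀ a, g a ∈ s) (he' : ∀ b, e' b ∈ s) (b : β) : Function.extend f g e' b ∈ s := by
  classical
  rw [Function.extend_def]
  split_ifs
  exacts [hg _, he' b]

section Caratheodory

variable {E : Type*} [AddCommGroup E] [Module ℝ E] [FiniteDimensional ℝ E]

theorem convexHull_eq_image_stdSimplex (s : Set E) :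
    convexHull ℝ s =
      (fun p : (Fin (finrank ℝ E + 1) → ℝ) × (Fin (finrank ℝ E + 1) → E) => ∑ i, p.1 i • p.2 i) ''
        (stdSimplex ℝ _ ×ˢ univ.pi fun _ => s) := by
  classical
  refine Subset.antisymm (fun x hx => ?_) ?_
  · obtain ⟨x₀, hx₀⟩ := convexHull_nonempty_iff.mp ⟨x, hx⟩
    obtain ⟨ι, _, z, w, hzs, hz, hw0, hw1, rfl⟩ := eq_pos_convex_span_of_mem_convexHull hx
    have hcard : Fintype.card ι ≤ Fintype.card (Fin (finrank ℝ E + 1)) := by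
      simpa using hz.card_le_finrank_succ.trans (Nat.succ_le_succ (Submodule.finrank_le _))
    obtain ⟨e⟩ := Function.Embedding.nonempty_of_card_le hcard
    refine ⟨(Function.extend e w fun _ => 0, Function.extend e z fun _ => x₀),
      ⟨⟨Function.extend_mem (s := Ici 0) (g := w) (fun i => (hw0 i).le) fun _ => self_mem_Ici, ?_⟩,
        fun j _ => Function.extend_mem (fun i => hzs (mem_range_self i)) (fun _ => hx₀) j⟩, ?_⟩
    on_goal 1 => rw [← hw1]
    all_goals
      refine (Fintype.sum_of_injective e e.injective _ _ (fun j hj => ?_) fun i => ?_).symm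
      · simp [Function.extend_apply' _ _ _ hj]
      · simp [e.injective.extend_apply]
  · rintro _ ⟨⟨t, p⟩, ⟨⟨ht0, ht1⟩, hp⟩, rfl⟩
    exact (convex_convexHull ℝ s).sum_mem (fun i _ => ht0 i) ht1
      fun i _ => subset_convexHull ℝ s (hp i (mem_univ i))

theorem IsCompact.convexHull [TopologicalSpace E] [ContinuousAdd E] [ContinuousSMul ℝ E]
    {s : Set E} (hs : IsCompact s) : IsCompact (convexHull ℝ s) := by
  rw [convexHull_eq_image_stdSimplex]
  exact ((isCompact_stdSimplex ℝ _).prod (isCompact_univ_pi fun _ => hs)).image (by fun_prop)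

end Caratheodory

theorem PointedCone.eq_zero_or_mem_smul_convexHull_of_mem_hull {E : Type*} [AddCommGroup E]
    [Module ℝ E] {s : Set E} {y : E} (hy : y ∈ PointedCone.hull ℝ s) :
    y = 0 ∨ ∃ r : ℝ, 0 < r ∧ y ∈ r • convexHull ℝ s := by
  rw [← ConvexCone.mem_hull_of_convex (convex_convexHull ℝ s)]
  induction hy using Submodule.span_induction with
  | mem x hx => exact .inr (ConvexCone.subset_hull (subset_convexHull ℝ s hx))
  | zero => exact .inl rfl
  | add x y _ _ hx hy =>
    rcases hx with rfl | hx
    · simpa using hy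
    rcases hy with rfl | hy
    · simpa using Or.inr hx
    exact .inr ((ConvexCone.hull ℝ _).add_mem hx hy)
  | smul a x _ hx =>
    rcases eq_or_ne a 0 with rfl | ha
    · exact .inl (zero_smul _ x)
    rcases hx with rfl | hx
    · exact .inl (smul_zero a)
    exact .inr ((ConvexCone.hull ℝ _).smul_mem (NNReal.coe_pos.mpr ha.bot_lt) hx)

theorem NormedSpace.continuousAt_normalize {E : Type*} [NormedAddCommGroup E] [NormedSpace ℝ E]
    {x : E} (hx : x ≠ 0) : ContinuousAt normalize x :=
  (continuous_norm.continuousAt.inv₀ (norm_ne_zero_iff.mpr hx)).smul continuousAt_id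

theorem sphere_inter_closure_subset {E : Type*} [NormedAddCommGroup E] [NormedSpace ℝ E]
    {C T : Set E} (hT : IsClosed T) (hCT : ∀ y ∈ C, y ≠ 0 → normalize y ∈ T) :
    Metric.sphere 0 1 ∩ closure C ⊆ T := by
  rintro z ⟨hz, hzC⟩
  rw [mem_sphere_zero_iff_norm] at hz
  have hz0 : z ≠ 0 := norm_ne_zero_iff.mp (by simp [hz])
  have hmem : z ∈ closure ({0}ᶜ ∩ C) := isOpen_compl_singleton.inter_closure ⟨hz0, hzC⟩
  have himage := (continuousAt_normalize hz0).continuousWithinAt.mem_closure_image hmem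
  rw [normalize_eq_self_of_norm_eq_one hz] at himage
  exact closure_minimal (image_subset_iff.mpr fun y hy => hCT y hy.2 hy.1) hT himage

theorem ProperCone.innerDual_sphere_inter {E : Type*} [NormedAddCommGroup E]
    [InnerProductSpace ℝ E] [CompleteSpace E] (C : PointedCone ℝ E) :
    ProperCone.innerDual (Metric.sphere (0 : E) 1 ∩ C) = ProperCone.innerDual (C : Set E) := by
  refine le_antisymm (fun y hy => ?_) (innerDual_le_innerDual inter_subset_right)
  rw [mem_innerDual] at hy ⊢
  intro x hx
  rcases eq_or_ne x 0 with rfl | hx0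
  · simp
  have hxS : normalize x ∈ Metric.sphere (0 : E) 1 ∩ C :=
    ⟨by simpa using norm_normalize_eq_one_iff.mpr hx0, C.smul_mem (by positivity) hx⟩
  rw [← norm_smul_normalize x, real_inner_smul_left]
  exact mul_nonneg (norm_nonneg x) (hy hxS)

theorem inner_neg_of_mem_convexHull {E : Type*} [NormedAddCommGroup E] [InnerProductSpace ℝ E]
    {X : Set E} {P w : E} (hX : ∀ x ∈ X, ⟪P, x⟫ < 0) (hw : w ∈ convexHull ℝ X) : ⟪P, w⟫ < 0 :=
  convexHull_min hX (convex_halfSpace_lt (innerₛₗ ℝ P).isLinear 0) hw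

section Sphere

variable {n : ℕ}

theorem mem_sphereSet {z : EuclideanSpace ℝ (Fin (n+2))} : z ∈ sphereSet n ↔ ‖z‖ = 1 :=
  mem_sphere_zero_iff_norm

theorem sconv_eq_image_normalize (X : Set (EuclideanSpace ℝ (Fin (n+2)))) :
    sconv X = NormedSpace.normalize '' convexHull ℝ X := by
  ext z
  constructor
  · rintro ⟨k, P, t, hP, ht, ht1, rfl⟩
    exact ⟨_, (convex_convexHull ℝ X).sum_mem (fun i _ => ht i) ht1
      fun i _ => subset_convexHull ℝ X (hP i), rfl⟩
  · rintro ⟨w, hw, rfl⟩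
    rw [convexHull_eq_image_stdSimplex] at hw
    obtain ⟨⟨t, P⟩, ⟨⟨ht0, ht1⟩, hP⟩, rfl⟩ := hw
    exact ⟨_, P, t, fun i => hP i (mem_univ i), ht0, ht1, rfl⟩

theorem sconv_empty : sconv (∅ : Set (EuclideanSpace ℝ (Fin (n+2)))) = ∅ := by
  simp [sconv_eq_image_normalize]

theorem sphPolar_sphPolar_empty :
    sphPolar (sphPolar (∅ : Set (EuclideanSpace ℝ (Fin (n+2))))) = ∅ := by
  have hempty : sphPolar (∅ : Set (EuclideanSpace ℝ (Fin (n+2)))) = univ := by simp [sphPolar]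
  rw [hempty, eq_empty_iff_forall_notMem]
  intro z hz
  obtain ⟨hzS, hz⟩ : z ∈ hemi (-z) := mem_iInter₂.mp hz (-z) (mem_univ _)
  rw [inner_neg_left, real_inner_self_eq_norm_sq, mem_sphereSet.mp hzS] at hz
  norm_num at hz

theorem sphPolar_eq_inter_innerDual {Y : Set (EuclideanSpace ℝ (Fin (n+2)))} (hY : Y.Nonempty) :
    sphPolar Y = sphereSet n ∩ (ProperCone.innerDual Y : Set (EuclideanSpace ℝ (Fin (n+2)))) := by
  obtain ⟨P, hP⟩ := hY
  ext Q
  simp only [sphPolar, hemi, mem_iInter, mem_ofPred_eq, mem_inter_iff, SetLike.mem_coe,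
    ProperCone.mem_innerDual]
  exact ⟨fun h => ⟨(h P hP).1, fun x hx => (h x hx).2⟩, fun h x hx => ⟨h.1, h.2 hx⟩⟩

theorem innerDual_sphereSet_inter (K : ProperCone ℝ (EuclideanSpace ℝ (Fin (n+2)))) :
    ProperCone.innerDual (sphereSet n ∩ K) = ProperCone.innerDual (K : Set _) :=
  ProperCone.innerDual_sphere_inter K.toPointedCone

theorem sphPolar_sphPolar_sphereSet_inter (K : ProperCone ℝ (EuclideanSpace ℝ (Fin (n+2))))
    (hK : (sphereSet n ∩ K).Nonempty)
    (hK' : (sphereSet n ∩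
      ↑(ProperCone.innerDual (K : Set (EuclideanSpace ℝ (Fin (n+2)))))).Nonempty) :
    sphPolar (sphPolar (sphereSet n ∩ K)) = sphereSet n ∩ K := by
  rw [sphPolar_eq_inter_innerDual hK, innerDual_sphereSet_inter, sphPolar_eq_inter_innerDual hK',
    innerDual_sphereSet_inter, ProperCone.innerDual_innerDual]

variable {X : Set (EuclideanSpace ℝ (Fin (n+2)))} {P : EuclideanSpace ℝ (Fin (n+2))}

theorem sconv_subset_sphereSet_inter (hX : ∀ x ∈ X, ⟪P, x⟫ < 0) :
    sconv X ⊆ sphereSet n ∩ {z | ⟪P, z⟫ < 0} := by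
  rw [sconv_eq_image_normalize]
  rintro _ ⟨w, hw, rfl⟩
  have hPw := inner_neg_of_mem_convexHull hX hw
  have hw0 : w ≠ 0 := by rintro rfl; simp at hPw
  refine ⟨mem_sphereSet.mpr (norm_normalize_eq_one_iff.mpr hw0), ?_⟩
  show ⟪P, ‖w‖⁻¹ • w⟫ < 0
  rw [real_inner_smul_right]
  exact mul_neg_of_pos_of_neg (by positivity) hPw

theorem isClosed_sconv (hXc : IsCompact X) (hX : ∀ x ∈ X, ⟪P, x⟫ < 0) : IsClosed (sconv X) := by
  rw [sconv_eq_image_normalize]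
  refine (hXc.convexHull.image_of_continuousOn fun w hw => ?_).isClosed
  refine (continuousAt_normalize ?_).continuousWithinAt
  rintro rfl
  simpa using inner_neg_of_mem_convexHull hX hw

theorem sconv_eq_sphereSet_inter_closure_hull (hXc : IsCompact X) (hX : ∀ x ∈ X, ⟪P, x⟫ < 0) :
    sconv X =
      sphereSet n ∩ closure (PointedCone.hull ℝ X : Set (EuclideanSpace ℝ (Fin (n+2)))) := by
  refine Subset.antisymm (fun z hz => ⟨(sconv_subset_sphereSet_inter hX hz).1, ?_⟩) ?_
  · rw [sconv_eq_image_normalize] at hz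
    obtain ⟨w, hw, rfl⟩ := hz
    have hwK : w ∈ PointedCone.hull ℝ X :=
      convexHull_min PointedCone.subset_hull (PointedCone.convex _) hw
    exact subset_closure ((PointedCone.hull ℝ X).smul_mem (by positivity) hwK)
  · refine sphere_inter_closure_subset (isClosed_sconv hXc hX) fun y hy hy0 => ?_
    obtain ⟨r, hr, c, hc, rfl⟩ :=
      (PointedCone.eq_zero_or_mem_smul_convexHull_of_mem_hull hy).resolve_left hy0
    rw [normalize_smul_of_pos hr, sconv_eq_image_normalize]
    exact mem_image_of_mem _ hc

theorem Hemispherical.exists_inner_neg {X : Set (EuclideanSpace ℝ (Fin (n+2)))}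
    (hX : Hemispherical X) (hsub : X ⊆ sphereSet n) :
    ∃ P ∈ sphereSet n, ∀ x ∈ X, ⟪P, x⟫ < 0 := by
  obtain ⟨P, hP, hPX⟩ := hX
  exact ⟨P, hP, fun x hx => not_le.mp fun h => (eq_empty_iff_forall_notMem.mp hPX) x
    ⟨⟨hsub hx, h⟩, hx⟩⟩

end Sphere

/-- For a closed hemispherical subset `X ⊆ S^{n+1}`,
`s-conv(X) = (s-conv(X))°°`. -/
theorem stmt_7 {n : ℕ} (X : Set (EuclideanSpace ℝ (Fin (n+2))))
    (hsub : X ⊆ sphereSet n) (hcl : IsClosed X) (hhem : Hemispherical X) :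
    sconv X = sphPolar (sphPolar (sconv X)) := by
  rcases X.eq_empty_or_nonempty with rfl | hXne
  · rw [sconv_empty, sphPolar_sphPolar_empty]
  obtain ⟨P, hP, hPX⟩ := hhem.exists_inner_neg hsub
  have hXc : IsCompact X :=
    Metric.isCompact_of_isClosed_isBounded hcl (Metric.isBounded_sphere.subset hsub)
  set K : ProperCone ℝ (EuclideanSpace ℝ (Fin (n+2))) := Submodule.closure (PointedCone.hull ℝ X)
  have hT : sconv X = sphereSet n ∩ K := sconv_eq_sphereSet_inter_closure_hull hXc hPX
  have hTne : (sconv X).Nonempty := by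
    rw [sconv_eq_image_normalize]
    exact (convexHull_nonempty_iff.mpr hXne).image _
  have hKdual : (sphereSet n ∩
      ↑(ProperCone.innerDual (K : Set (EuclideanSpace ℝ (Fin (n+2)))))).Nonempty := by
    refine ⟨-P, by simpa [mem_sphereSet] using hP, ?_⟩
    rw [← innerDual_sphereSet_inter, ← hT, SetLike.mem_coe, ProperCone.mem_innerDual]
    intro z hz
    rw [inner_neg_right, real_inner_comm, neg_nonneg]
    exact (sconv_subset_sphereSet_inter hPX hz).2.le
  rw [hT] at hTne ⊢
  exact (sphPolar_sphPolar_sphereSet_inter K hTne hKdual).symm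
end
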